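/- Let X be an f-Banach asymmetric normed space, K ⊆ X nonempty, convex, f-closed, f-bounded and weakly f-compact, and T : K → K f-non-expansive; assume f-convergence implies b-convergence in X. If K possesses forward normal structure (every convex bounded subset H ⊆ K with diam(H) > 0 contains a point u with sup_{v∈H} ‖v − u| < diam(H)), then T has a fixed point in K. -/

import Mathlib

/-!
Kirk's argument. Zorn's lemma and weak compactness give a minimal nonempty, convex, closed,
`T`-invariant set `D ⊆ K`. If `D` lies in the forward ball `B⁺(u, r)` for some `u ∈ D`, then the
points `w ∈ D` with `D ⊆ B⁺(w, r)` form a convex, closed, `T`-invariant set (by minimality applied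
to `D ∩ B⁺(T w, r)`, which `T` maps into itself by non-expansiveness), hence all of `D`, so
`diam D ≤ r`. With `r` the radius of `D` at a forward non-diametral point this contradicts
normal structure, so `diam D = 0` and `D` consists of fixed points.

Weak closedness: since f-convergence implies b-convergence, `n (-y) ≤ C * n y`, so the forward
topology is the topology of the seminorm `max (n x) (n (-x))`, and Hahn–Banach separation in that
locally convex space shows that convex forward-closed sets are weakly closed.
-/

open Filter Topology Set

section AsymmetricNorm

variable {X : Type*} [AddCommGroup X]

def forwardClosedBall (n : X → ℝ) (z : X) (r : ℝ) : Set X := {u | n (u - z) ≤ r}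

def backwardClosedBall (n : X → ℝ) (z : X) (r : ℝ) : Set X := {u | n (z - u) ≤ r}

noncomputable def asymDiam (n : X → ℝ) (H : Set X) : ℝ :=
  sSup {r | ∃ u ∈ H, ∃ v ∈ H, r = n (v - u)}

noncomputable def asymRadius (n : X → ℝ) (u : X) (H : Set X) : ℝ :=
  sSup {r | ∃ v ∈ H, r = n (v - u)}

section Diameter

variable {n : X → ℝ} {H : Set X} {C : ℝ}

lemma le_asymDiam (hC : ∀ u ∈ H, ∀ v ∈ H, n (v - u) ≤ C) {u v : X} (hu : u ∈ H) (hv : v ∈ H) :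
    n (v - u) ≤ asymDiam n H :=
  le_csSup ⟨C, by rintro _ ⟨u, hu, v, hv, rfl⟩; exact hC u hu v hv⟩ ⟨u, hu, v, hv, rfl⟩

lemma asymDiam_le (hH : H.Nonempty) (hC : ∀ u ∈ H, ∀ v ∈ H, n (v - u) ≤ C) :
    asymDiam n H ≤ C := by
  obtain ⟨u, hu⟩ := hH
  exact csSup_le ⟨_, u, hu, u, hu, rfl⟩ (by rintro _ ⟨u, hu, v, hv, rfl⟩; exact hC u hu v hv)

lemma subset_forwardClosedBall_asymRadius (hC : ∀ u ∈ H, ∀ v ∈ H, n (v - u) ≤ C) {u : X}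
    (hu : u ∈ H) : H ⊆ forwardClosedBall n u (asymRadius n u H) := fun v hv =>
  le_csSup ⟨C, by rintro _ ⟨v, hv, rfl⟩; exact hC u hu v hv⟩ ⟨v, hv, rfl⟩

end Diameter

variable [Module ℝ X]

structure IsAsymmetricSeminorm (n : X → ℝ) : Prop where
  nonneg : ∀ x, 0 ≤ n x
  smul_of_nonneg : ∀ l : ℝ, 0 ≤ l → ∀ x, n (l • x) = l * n x
  add_le : ∀ x y, n (x + y) ≤ n x + n y

def HasForwardNormalStructure (n : X → ℝ) (K : Set X) : Prop :=
  ∀ H ⊆ K, Convex ℝ H → (∃ C : ℝ, ∀ u ∈ H, ∀ v ∈ H, n (v - u) ≤ C) →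
    0 < asymDiam n H → ∃ u ∈ H, asymRadius n u H < asymDiam n H

namespace IsAsymmetricSeminorm

variable {n : X → ℝ}

lemma map_zero (hn : IsAsymmetricSeminorm n) : n 0 = 0 := by
  simpa using hn.smul_of_nonneg 0 le_rfl 0

lemma sub_le (hn : IsAsymmetricSeminorm n) (x y z : X) : n (x - z) ≤ n (x - y) + n (y - z) := by
  simpa using hn.add_le (x - y) (y - z)

lemma map_convexCombo_le (hn : IsAsymmetricSeminorm n) {x y : X} {r : ℝ} (hx : n x ≤ r)
    (hy : n y ≤ r) {a b : ℝ} (ha : 0 ≤ a) (hb : 0 ≤ b) (hab : a + b = 1) :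
    n (a • x + b • y) ≤ r := calc
  n (a • x + b • y) ≤ a * n x + b * n y := by
    simpa only [hn.smul_of_nonneg a ha, hn.smul_of_nonneg b hb] using hn.add_le (a • x) (b • y)
  _ ≤ a * r + b * r := by gcongr
  _ = r := by rw [← add_mul, hab, one_mul]

lemma convex_forwardClosedBall (hn : IsAsymmetricSeminorm n) (z : X) (r : ℝ) :
    Convex ℝ (forwardClosedBall n z r) := by
  intro u hu v hv a b ha hb hab
  have hsplit : a • u + b • v - z = a • (u - z) + b • (v - z) := by
    linear_combination (norm := module) hab • z
  show n (a • u + b • v - z) ≤ r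
  rw [hsplit]
  exact hn.map_convexCombo_le hu hv ha hb hab

lemma convex_backwardClosedBall (hn : IsAsymmetricSeminorm n) (z : X) (r : ℝ) :
    Convex ℝ (backwardClosedBall n z r) := by
  intro u hu v hv a b ha hb hab
  have hsplit : z - (a • u + b • v) = a • (z - u) + b • (z - v) := by
    linear_combination (norm := module) (-hab) • z
  show n (z - (a • u + b • v)) ≤ r
  rw [hsplit]
  exact hn.map_convexCombo_le hu hv ha hb hab

end IsAsymmetricSeminorm

section MinimalInvariant

variable [TopologicalSpace X]

structure IsInvariantConvexClosedSubset (K : Set X) (T : X → X) (D : Set X) : Prop where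
  subset : D ⊆ K
  nonempty : D.Nonempty
  convex : Convex ℝ D
  isClosed : IsClosed D
  mapsTo : MapsTo T D D

variable {K D G : Set X} {T : X → X}

lemma exists_minimal_isInvariantConvexClosedSubset (hK : IsCompact K)
    (hKT : IsInvariantConvexClosedSubset K T K) :
    ∃ D, Minimal (IsInvariantConvexClosedSubset K T) D := by
  refine (zorn_superset_nonempty {D | IsInvariantConvexClosedSubset K T D}
    (fun c hc hchain ⟨D₀, hD₀⟩ => ?_) K hKT).imp fun D hD => hD.2
  have : Nonempty c := ⟨⟨D₀, hD₀⟩⟩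
  refine ⟨⋂₀ c, ⟨(sInter_subset_of_mem hD₀).trans (hc hD₀).subset, ?_, ?_, ?_, ?_⟩,
    fun D hD => sInter_subset_of_mem hD⟩
  · exact IsCompact.nonempty_sInter_of_directed_nonempty_isCompact_isClosed
      (IsChain.directedOn (r := fun s t : Set X => s ⊇ t) hchain.symm)
      (fun D hD => (hc hD).nonempty)
      (fun D hD => hK.of_isClosed_subset (hc hD).isClosed (hc hD).subset)
      (fun D hD => (hc hD).isClosed)
  · exact convex_sInter fun D hD => (hc hD).convex
  · exact isClosed_sInter fun D hD => (hc hD).isClosed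
  · exact fun x hx => mem_sInter.2 fun D hD => (hc hD).mapsTo (mem_sInter.1 hx D hD)

lemma Minimal.subset_of_mapsTo_inter (hD : Minimal (IsInvariantConvexClosedSubset K T) D)
    (hG : Convex ℝ G) (hGc : IsClosed G) (hne : (D ∩ G).Nonempty) (hT : MapsTo T (D ∩ G) G) :
    D ⊆ G := by
  have hDG : IsInvariantConvexClosedSubset K T (D ∩ G) :=
    ⟨inter_subset_left.trans hD.prop.subset, hne, hD.prop.convex.inter hG,
      hD.prop.isClosed.inter hGc, fun x hx => ⟨hD.prop.mapsTo hx.1, hT hx⟩⟩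
  rw [← hD.eq_of_subset hDG inter_subset_left]
  exact inter_subset_right

end MinimalInvariant

namespace IsAsymmetricSeminorm

variable [TopologicalSpace X] {n : X → ℝ} {K D : Set X} {T : X → X}

lemma subset_forwardClosedBall_apply (hn : IsAsymmetricSeminorm n)
    (hball : ∀ z r, IsClosed (forwardClosedBall n z r))
    (hT : ∀ x ∈ K, ∀ y ∈ K, n (T y - T x) ≤ n (y - x))
    (hD : Minimal (IsInvariantConvexClosedSubset K T) D) {w : X} (hw : w ∈ D) {r : ℝ}
    (hwr : D ⊆ forwardClosedBall n w r) : D ⊆ forwardClosedBall n (T w) r := by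
  have hr : 0 ≤ r := by simpa [forwardClosedBall, hn.map_zero] using hwr hw
  refine hD.subset_of_mapsTo_inter (hn.convex_forwardClosedBall _ _) (hball _ _)
    ⟨T w, hD.prop.mapsTo hw, by simpa [forwardClosedBall, hn.map_zero] using hr⟩ fun v hv => ?_
  exact (hT w (hD.prop.subset hw) v (hD.prop.subset hv.1)).trans (hwr hv.1)

lemma asymDiam_le_of_subset_forwardClosedBall (hn : IsAsymmetricSeminorm n)
    (hfwd : ∀ z r, IsClosed (forwardClosedBall n z r))
    (hbwd : ∀ z r, IsClosed (backwardClosedBall n z r))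
    (hT : ∀ x ∈ K, ∀ y ∈ K, n (T y - T x) ≤ n (y - x))
    (hD : Minimal (IsInvariantConvexClosedSubset K T) D) {u : X} (hu : u ∈ D) {r : ℝ}
    (hur : D ⊆ forwardClosedBall n u r) : asymDiam n D ≤ r := by
  have hcentre : ∀ w, w ∈ ⋂ v ∈ D, backwardClosedBall n v r ↔ D ⊆ forwardClosedBall n w r :=
    fun w => mem_iInter₂
  have hDC : D ⊆ ⋂ v ∈ D, backwardClosedBall n v r :=
    hD.subset_of_mapsTo_inter (convex_iInter₂ fun v _ => hn.convex_backwardClosedBall v r)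
      (isClosed_biInter fun v _ => hbwd v r) ⟨u, hu, (hcentre u).2 hur⟩
      fun w hw => (hcentre _).2 <|
        hn.subset_forwardClosedBall_apply hfwd hT hD hw.1 ((hcentre w).1 hw.2)
  exact asymDiam_le hD.prop.nonempty fun w hw v hv => (hcentre w).1 (hDC hw) hv

theorem exists_fixedPoint_of_hasForwardNormalStructure (hn : IsAsymmetricSeminorm n)
    (h_zero : ∀ y, n y = 0 → y = 0)
    (hfwd : ∀ z r, IsClosed (forwardClosedBall n z r))
    (hbwd : ∀ z r, IsClosed (backwardClosedBall n z r))
    (hK_ne : K.Nonempty) (hK_conv : Convex ℝ K) (hK_closed : IsClosed K)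
    (hK_cpt : IsCompact K) {C : ℝ} (hK_bdd : ∀ u ∈ K, ∀ v ∈ K, n (v - u) ≤ C)
    (hT_maps : MapsTo T K K) (hT : ∀ x ∈ K, ∀ y ∈ K, n (T y - T x) ≤ n (y - x))
    (h_normal : HasForwardNormalStructure n K) : ∃ x ∈ K, T x = x := by
  obtain ⟨D, hD⟩ := exists_minimal_isInvariantConvexClosedSubset hK_cpt
    ⟨subset_rfl, hK_ne, hK_conv, hK_closed, hT_maps⟩
  have hD_bdd : ∀ u ∈ D, ∀ v ∈ D, n (v - u) ≤ C :=
    fun u hu v hv => hK_bdd u (hD.prop.subset hu) v (hD.prop.subset hv)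
  by_cases hdiam : 0 < asymDiam n D
  · obtain ⟨u, hu, hlt⟩ := h_normal D hD.prop.subset hD.prop.convex ⟨C, hD_bdd⟩ hdiam
    exact absurd (hn.asymDiam_le_of_subset_forwardClosedBall hfwd hbwd hT hD hu
      (subset_forwardClosedBall_asymRadius hD_bdd hu)) hlt.not_ge
  · obtain ⟨x, hx⟩ := hD.prop.nonempty
    have hTx : n (T x - x) = 0 := le_antisymm
      ((le_asymDiam hD_bdd hx (hD.prop.mapsTo hx)).trans (not_lt.1 hdiam)) (hn.nonneg _)
    exact ⟨x, hD.prop.subset hx, sub_eq_zero.1 (h_zero _ hTx)⟩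

end IsAsymmetricSeminorm

section ForwardTopology

abbrev forwardTopology {Y : Type*} [Sub Y] (n : Y → ℝ) : TopologicalSpace Y :=
  TopologicalSpace.generateFrom {s | ∃ x r, s = {u | n (u - x) < r}}

lemma le_forwardTopology {Y : Type*} [TopologicalSpace Y] [Sub Y] [ContinuousSub Y]
    {n : Y → ℝ} (hn : Continuous n) : ‹TopologicalSpace Y› ≤ forwardTopology n := by
  refine le_generateFrom ?_
  rintro _ ⟨x, r, rfl⟩
  exact isOpen_lt (hn.comp (continuous_id.sub continuous_const)) continuous_const

def forwardDual (n : X → ℝ) : Set (X →ₗ[ℝ] ℝ) :=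
  {φ | Continuous[forwardTopology n, forwardTopology fun t : ℝ => max t 0] φ}

abbrev weakForwardTopology (n : X → ℝ) : TopologicalSpace X :=
  TopologicalSpace.generateFrom
    {s | ∃ (x : X) (ε : ℝ) (m : ℕ) (φ : Fin m → (X →ₗ[ℝ] ℝ)),
      0 < ε ∧ (∀ i, φ i ∈ forwardDual n) ∧ s = {y | ∀ i, φ i (y - x) < ε}}

end ForwardTopology

namespace IsAsymmetricSeminorm

variable {n : X → ℝ} {C : ℝ}

lemma exists_neg_le_mul (hn : IsAsymmetricSeminorm n)
    (h : ∀ u : ℕ → X, Tendsto (fun k => n (u k)) atTop (𝓝 0) →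
      Tendsto (fun k => n (-u k)) atTop (𝓝 0)) :
    ∃ C, 0 ≤ C ∧ ∀ y, n (-y) ≤ C * n y := by
  by_contra! hcon
  choose y hy using fun k : ℕ => hcon (k + 1) (by positivity)
  have hpos (k : ℕ) : 0 < n (-y k) :=
    (mul_nonneg (by positivity) (hn.nonneg _)).trans_lt (hy k)
  -- a forward null sequence whose backward norms are all `1`
  set z : ℕ → X := fun k => (n (-y k))⁻¹ • y k
  have hz_neg (k : ℕ) : n (-z k) = 1 := by
    rw [← smul_neg, hn.smul_of_nonneg _ (inv_nonneg.2 (hpos k).le), inv_mul_cancel₀ (hpos k).ne']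
  have hz (k : ℕ) : n (z k) ≤ 1 / (k + 1) := by
    rw [hn.smul_of_nonneg _ (inv_nonneg.2 (hpos k).le), inv_mul_eq_div,
      div_le_div_iff₀ (hpos k) (by positivity)]
    linarith [hy k]
  have hz0 : Tendsto (fun k => n (z k)) atTop (𝓝 0) :=
    squeeze_zero (fun k => hn.nonneg _) hz tendsto_one_div_add_atTop_nhds_zero_nat
  have h1 := h z hz0
  simp only [hz_neg] at h1
  exact one_ne_zero (tendsto_nhds_unique tendsto_const_nhds h1)

lemma eq_zero_of_map_eq_zero (hn : IsAsymmetricSeminorm n)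
    (h_eq : ∀ x, n x = 0 ∧ n (-x) = 0 → x = 0) (hC : ∀ y, n (-y) ≤ C * n y) {y : X}
    (hy : n y = 0) : y = 0 :=
  h_eq y ⟨hy, le_antisymm (by simpa [hy] using hC y) (hn.nonneg _)⟩

lemma map_sub_le_of_subset_ball (hn : IsAsymmetricSeminorm n) (hC0 : 0 ≤ C)
    (hC : ∀ y, n (-y) ≤ C * n y) {K : Set X} {x : X} {r : ℝ}
    (hK : K ⊆ {u | n (u - x) < r}) : ∀ u ∈ K, ∀ v ∈ K, n (v - u) ≤ r + C * r := by
  intro u hu v hv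
  calc n (v - u) ≤ n (v - x) + n (-(u - x)) := by simpa using hn.sub_le v x u
    _ ≤ r + C * r := by
      gcongr
      · exact (hK hv).le
      · exact (hC _).trans (mul_le_mul_of_nonneg_left (hK hu).le hC0)

noncomputable def symmetrization (hn : IsAsymmetricSeminorm n) : Seminorm ℝ X :=
  Seminorm.of (fun x => max (n x) (n (-x)))
    (fun x y => by
      simp only [neg_add]
      exact max_le ((hn.add_le x y).trans (add_le_add (le_max_left _ _) (le_max_left _ _)))
        ((hn.add_le _ _).trans (add_le_add (le_max_right _ _) (le_max_right _ _))))
    (fun a x => by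
      rcases le_total 0 a with ha | ha
      · rw [← smul_neg, hn.smul_of_nonneg a ha, hn.smul_of_nonneg a ha, Real.norm_of_nonneg ha,
          mul_max_of_nonneg _ _ ha]
      · rw [show a • x = (-a) • -x by simp, ← smul_neg, neg_neg,
          hn.smul_of_nonneg _ (neg_nonneg.2 ha), hn.smul_of_nonneg _ (neg_nonneg.2 ha),
          Real.norm_of_nonpos ha, mul_max_of_nonneg _ _ (neg_nonneg.2 ha), max_comm])

lemma continuous_symmetrization (hn : IsAsymmetricSeminorm n) :
    letI := hn.symmetrization.toSeminormedAddCommGroup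
    Continuous n := by
  let := hn.symmetrization.toSeminormedAddCommGroup
  refine (LipschitzWith.of_dist_le_mul (K := 1) fun x y => ?_).continuous
  rw [NNReal.coe_one, one_mul, Real.dist_eq, dist_eq_norm, abs_sub_le_iff]
  change _ ≤ max (n (x - y)) (n (-(x - y))) ∧ _ ≤ max (n (x - y)) (n (-(x - y)))
  rw [neg_sub]
  have hxy : n x ≤ n (x - y) + n y := by simpa using hn.sub_le x y 0
  have hyx : n y ≤ n (y - x) + n x := by simpa using hn.sub_le y x 0
  constructor
  · linarith [le_max_left (n (x - y)) (n (y - x))]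
  · linarith [le_max_right (n (x - y)) (n (y - x))]

lemma forwardTopology_eq (hn : IsAsymmetricSeminorm n) (hC0 : 0 ≤ C)
    (hC : ∀ y, n (-y) ≤ C * n y) :
    forwardTopology n =
      hn.symmetrization.toSeminormedAddCommGroup.toUniformSpace.toTopologicalSpace := by
  let := hn.symmetrization.toSeminormedAddCommGroup
  refine le_antisymm (fun s hs => ?_) (le_forwardTopology hn.continuous_symmetrization)
  rw [Metric.isOpen_iff] at hs
  refine @isOpen_iff_forall_mem_open X (forwardTopology n) s |>.2 fun x hx => ?_
  obtain ⟨ε, hε, hball⟩ := hs x hx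
  refine ⟨{u | n (u - x) < ε / (1 + C)}, fun u hu => hball ?_,
    TopologicalSpace.isOpen_generateFrom_of_mem ⟨x, _, rfl⟩, by simp [hn.map_zero]; positivity⟩
  have hu : n (u - x) < ε / (1 + C) := hu
  rw [Metric.mem_ball, dist_eq_norm]
  change max (n (u - x)) (n (-(u - x))) < ε
  rw [lt_div_iff₀ (by positivity)] at hu
  have hnu := hn.nonneg (u - x)
  exact max_lt (by nlinarith) ((hC _).trans_lt (by nlinarith))

lemma isClosed_forwardClosedBall (hn : IsAsymmetricSeminorm n) (hC0 : 0 ≤ C)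
    (hC : ∀ y, n (-y) ≤ C * n y) (z : X) (r : ℝ) :
    IsClosed[forwardTopology n] (forwardClosedBall n z r) := by
  let := hn.symmetrization.toSeminormedAddCommGroup
  rw [hn.forwardTopology_eq hC0 hC]
  exact isClosed_le (hn.continuous_symmetrization.comp (continuous_sub_right z)) continuous_const

lemma isClosed_backwardClosedBall (hn : IsAsymmetricSeminorm n) (hC0 : 0 ≤ C)
    (hC : ∀ y, n (-y) ≤ C * n y) (z : X) (r : ℝ) :
    IsClosed[forwardTopology n] (backwardClosedBall n z r) := by
  let := hn.symmetrization.toSeminormedAddCommGroup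
  rw [hn.forwardTopology_eq hC0 hC]
  exact isClosed_le (hn.continuous_symmetrization.comp (continuous_sub_left z)) continuous_const

lemma exists_mem_forwardDual_lt (hn : IsAsymmetricSeminorm n) (hC0 : 0 ≤ C)
    (hC : ∀ y, n (-y) ≤ C * n y) {s : Set X} (hs : Convex ℝ s)
    (hs_closed : IsClosed[forwardTopology n] s) {x : X} (hx : x ∉ s) :
    ∃ φ ∈ forwardDual n, ∃ t, φ x < t ∧ ∀ y ∈ s, t < φ y := by
  let := hn.symmetrization.toSeminormedAddCommGroup
  let : NormedSpace ℝ X := ⟨fun a x => (map_smul_eq_mul hn.symmetrization a x).le⟩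
  have htop := hn.forwardTopology_eq hC0 hC
  rw [htop] at hs_closed
  obtain ⟨f, t, hfx, hfs⟩ := geometric_hahn_banach_point_closed hs hs_closed hx
  refine ⟨f.toLinearMap, ?_, t, hfx, hfs⟩
  change Continuous[forwardTopology n, forwardTopology fun t : ℝ => max t 0] f
  rw [htop]
  exact continuous_le_rng (le_forwardTopology (by fun_prop)) f.continuous

lemma isClosed_weakForwardTopology (hn : IsAsymmetricSeminorm n) (hC0 : 0 ≤ C)
    (hC : ∀ y, n (-y) ≤ C * n y) {s : Set X} (hs : Convex ℝ s)
    (hs_closed : IsClosed[forwardTopology n] s) : IsClosed[weakForwardTopology n] s := by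
  rw [← @isOpen_compl_iff X _ (weakForwardTopology n),
    @isOpen_iff_forall_mem_open X (weakForwardTopology n)]
  intro x hx
  obtain ⟨φ, hφ, t, hxt, hst⟩ := hn.exists_mem_forwardDual_lt hC0 hC hs hs_closed hx
  refine ⟨{y | ∀ _ : Fin 1, φ (y - x) < t - φ x}, fun y hy hys => ?_,
    TopologicalSpace.isOpen_generateFrom_of_mem
      ⟨x, t - φ x, 1, fun _ => φ, sub_pos.2 hxt, fun _ => hφ, rfl⟩,
    fun _ => by simpa using hxt⟩
  have := hy 0
  rw [map_sub] at this
  linarith [hst y hys]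

end IsAsymmetricSeminorm

end AsymmetricNorm

theorem fixedPoint_kirk_general {X : Type*} [AddCommGroup X] [Module ℝ X]
    (n : X → ℝ)
    (h_nonneg : ∀ x, 0 ≤ n x)
    (h_eq : ∀ x, (n x = 0 ∧ n (-x) = 0) ↔ x = 0)
    (h_hom : ∀ (l : ℝ), 0 ≤ l → ∀ x, n (l • x) = l * n x)
    (h_sub : ∀ x y, n (x + y) ≤ n x + n y)
    (tf : TopologicalSpace X)
    (htf : tf = TopologicalSpace.generateFrom
      {s : Set X | ∃ x r, s = {u | n (u - x) < r}})
    (h_fb : ∀ (u : ℕ → X) (x : X),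
      Tendsto (fun k => n (u k - x)) atTop (𝓝 0) →
      Tendsto (fun k => n (x - u k)) atTop (𝓝 0))
    (tu : TopologicalSpace ℝ)
    (htu : tu = TopologicalSpace.generateFrom
      {s : Set ℝ | ∃ x r, s = {u | max (u - x) 0 < r}})
    (dual : Set (X →ₗ[ℝ] ℝ))
    (hdual : dual = {φ : X →ₗ[ℝ] ℝ | @Continuous X ℝ tf tu fun v => φ v})
    (tw : TopologicalSpace X)
    (htw : tw = TopologicalSpace.generateFrom
      {s : Set X | ∃ (x : X) (ε : ℝ) (m : ℕ) (φ : Fin m → (X →ₗ[ℝ] ℝ)),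
        0 < ε ∧ (∀ i, φ i ∈ dual) ∧ s = {y | ∀ i, φ i (y - x) < ε}})
    (K : Set X) (hK_ne : K.Nonempty) (hK_conv : Convex ℝ K)
    (hK_closed : @IsClosed X tf K)
    (hK_bdd : ∃ x r, K ⊆ {u | n (u - x) < r})
    (hK_wcpt : @IsCompact X tw K)
    (T : X → X) (hT_maps : Set.MapsTo T K K)
    (hT_nonexp : ∀ x ∈ K, ∀ y ∈ K, n (T y - T x) ≤ n (y - x))
    (h_normal : ∀ H ⊆ K, Convex ℝ H →
      (∃ C : ℝ, ∀ u ∈ H, ∀ v ∈ H, n (v - u) ≤ C) →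
      0 < sSup {r | ∃ u ∈ H, ∃ v ∈ H, r = n (v - u)} →
      ∃ u ∈ H, sSup {r | ∃ v ∈ H, r = n (v - u)} <
        sSup {r | ∃ u' ∈ H, ∃ v ∈ H, r = n (v - u')}) :
    ∃ x ∈ K, T x = x := by
  subst htf htu hdual htw
  have hn : IsAsymmetricSeminorm n := ⟨h_nonneg, h_hom, h_sub⟩
  obtain ⟨C, hC0, hC⟩ := hn.exists_neg_le_mul fun u hu => by
    simpa using h_fb u 0 (by simpa using hu)
  obtain ⟨x, r, hK_ball⟩ := hK_bdd
  have hweak {s : Set X} (hs : Convex ℝ s) (hs_closed : IsClosed[forwardTopology n] s) :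
      IsClosed[weakForwardTopology n] s :=
    hn.isClosed_weakForwardTopology hC0 hC hs hs_closed
  let := weakForwardTopology n
  exact hn.exists_fixedPoint_of_hasForwardNormalStructure
    (fun _ => hn.eq_zero_of_map_eq_zero (fun x => (h_eq x).1) hC)
    (fun z r => hweak (hn.convex_forwardClosedBall z r) (hn.isClosed_forwardClosedBall hC0 hC z r))
    (fun z r => hweak (hn.convex_backwardClosedBall z r)
      (hn.isClosed_backwardClosedBall hC0 hC z r))
    hK_ne hK_conv (hweak hK_conv hK_closed) hK_wcpt
    (hn.map_sub_le_of_subset_ball hC0 hC hK_ball) hT_maps hT_nonexp h_normal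

/-- Kirk type: an f-non-expansive self-map of a nonempty,
convex, f-closed, f-bounded, weakly f-compact subset K with forward normal
structure, in an f-Banach asymmetric normed space where f-convergence implies
b-convergence, has a fixed point. -/
theorem fixedPoint_kirk {X : Type*} [AddCommGroup X] [Module ℝ X]
    (n : X → ℝ)
    (h_nonneg : ∀ x, 0 ≤ n x)
    (h_eq : ∀ x, (n x = 0 ∧ n (-x) = 0) ↔ x = 0)
    (h_hom : ∀ (l : ℝ), 0 ≤ l → ∀ x, n (l • x) = l * n x)
    (h_sub : ∀ x y, n (x + y) ≤ n x + n y)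
    (tf : TopologicalSpace X)
    (htf : tf = TopologicalSpace.generateFrom
      {s : Set X | ∃ x r, s = {u | n (u - x) < r}})
    (h_complete : ∀ u : ℕ → X,
      (∀ ε > 0, ∃ N, ∀ m k, N ≤ k → k ≤ m → n (u m - u k) < ε) →
      ∃ x, Tendsto (fun k => n (u k - x)) atTop (𝓝 0))
    (h_fb : ∀ (u : ℕ → X) (x : X),
      Tendsto (fun k => n (u k - x)) atTop (𝓝 0) →
      Tendsto (fun k => n (x - u k)) atTop (𝓝 0))
    (tu : TopologicalSpace ℝ)
    (htu : tu = TopologicalSpace.generateFrom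
      {s : Set ℝ | ∃ x r, s = {u | max (u - x) 0 < r}})
    (dual : Set (X →ₗ[ℝ] ℝ))
    (hdual : dual = {φ : X →ₗ[ℝ] ℝ | @Continuous X ℝ tf tu fun v => φ v})
    (tw : TopologicalSpace X)
    (htw : tw = TopologicalSpace.generateFrom
      {s : Set X | ∃ (x : X) (ε : ℝ) (m : ℕ) (φ : Fin m → (X →ₗ[ℝ] ℝ)),
        0 < ε ∧ (∀ i, φ i ∈ dual) ∧ s = {y | ∀ i, φ i (y - x) < ε}})
    (K : Set X) (hK_ne : K.Nonempty) (hK_conv : Convex ℝ K)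
    (hK_closed : @IsClosed X tf K)
    (hK_bdd : ∃ x r, K ⊆ {u | n (u - x) < r})
    (hK_wcpt : @IsCompact X tw K)
    (T : X → X) (hT_maps : Set.MapsTo T K K)
    (hT_nonexp : ∀ x ∈ K, ∀ y ∈ K, n (T y - T x) ≤ n (y - x))
    (h_normal : ∀ H ⊆ K, Convex ℝ H →
      (∃ C : ℝ, ∀ u ∈ H, ∀ v ∈ H, n (v - u) ≤ C) →
      0 < sSup {r | ∃ u ∈ H, ∃ v ∈ H, r = n (v - u)} →
      ∃ u ∈ H, sSup {r | ∃ v ∈ H, r = n (v - u)} <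
        sSup {r | ∃ u' ∈ H, ∃ v ∈ H, r = n (v - u')}) :
    ∃ x ∈ K, T x = x :=
  fixedPoint_kirk_general n h_nonneg h_eq h_hom h_sub tf htf h_fb tu htu dual hdual tw htw K hK_ne
    hK_conv hK_closed hK_bdd hK_wcpt T hT_maps hT_nonexp h_normal
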